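/- Let F : ℝ^d → ℝ be L-smooth and μ-strongly convex with L ≤ μ. Let θ_N, θ_i, θ_j ∈ ℝ^d with δ_i := ‖θ_N - θ_i‖ and δ_j := ‖θ_N - θ_j‖ satisfying δ_i ≤ δ_j, and suppose ‖∇F(θ_N)‖ ≤ L|δ_i² - δ_j²| / (2‖θ_i - θ_j‖) (with θ_i ≠ θ_j). Then F(θ_i) ≤ F(θ_j). -/

import Mathlib

open scoped RealInnerProductSpace

/-!
Expand `F` around `θN`: smoothness bounds `F θi` from above and strong convexity bounds `F θj`
from below by quadratics with the same linear term `⟪∇F θN, ·⟫`. Since `L ≤ μ`, the difference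
of the two bounds is at most `⟪∇F θN, θi - θj⟫ - L/2 (δj² - δi²)`, and by Cauchy–Schwarz the
gradient hypothesis makes this nonpositive.
-/

section QuadraticSandwich

variable {E : Type*} [NormedAddCommGroup E] [InnerProductSpace ℝ E]

theorem le_of_quadratic_upper_lower_bounds {F : E → ℝ} {g x y z : E} {L μ : ℝ}
    (hx : F x ≤ F y + ⟪g, x - y⟫ + L / 2 * ‖x - y‖ ^ 2)
    (hz : F z ≥ F y + ⟪g, z - y⟫ + μ / 2 * ‖z - y‖ ^ 2)
    (hLμ : L ≤ μ) (hg : ‖g‖ * ‖x - z‖ ≤ L / 2 * (‖z - y‖ ^ 2 - ‖x - y‖ ^ 2)) :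
    F x ≤ F z := by
  have hinner : ⟪g, x - y⟫ - ⟪g, z - y⟫ ≤ ‖g‖ * ‖x - z‖ := by
    rw [← inner_sub_right, sub_sub_sub_cancel_right]
    exact real_inner_le_norm g (x - z)
  have hcurv : L / 2 * ‖z - y‖ ^ 2 ≤ μ / 2 * ‖z - y‖ ^ 2 := by gcongr
  linarith

end QuadraticSandwich

theorem mul_le_of_le_abs_div {G L a b c : ℝ} (hc : 0 < c) (hab : a ≤ b)
    (h : G ≤ L * |a - b| / (2 * c)) : G * c ≤ L / 2 * (b - a) :=
  calc G * c ≤ L * |a - b| / (2 * c) * c := mul_le_mul_of_nonneg_right h hc.le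
    _ = L / 2 * (b - a) := by
      rw [abs_sub_comm, abs_of_nonneg (sub_nonneg.2 hab)]
      field_simp

/-- FedSAC Theorem 1 (Fairness in Training Loss). -/
theorem fedsac_fairness_in_training_loss
    {d : ℕ} (F : EuclideanSpace ℝ (Fin d) → ℝ) (L μ : ℝ)
    (hsmooth : ∀ x y, F x ≤ F y + (inner ℝ (gradient F y) (x - y) : ℝ) + L / 2 * ‖x - y‖ ^ 2)
    (hconv : ∀ x y, F x ≥ F y + (inner ℝ (gradient F y) (x - y) : ℝ) + μ / 2 * ‖x - y‖ ^ 2)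
    (hLμ : L ≤ μ)
    (θN θi θj : EuclideanSpace ℝ (Fin d))
    (hne : θi ≠ θj)
    (hδ : ‖θN - θi‖ ≤ ‖θN - θj‖)
    (hgrad : ‖gradient F θN‖ ≤
      L * |‖θN - θi‖ ^ 2 - ‖θN - θj‖ ^ 2| / (2 * ‖θi - θj‖)) :
    F θi ≤ F θj := by
  have hdist : 0 < ‖θi - θj‖ := norm_pos_iff.2 (sub_ne_zero.2 hne)
  have hδsq : ‖θN - θi‖ ^ 2 ≤ ‖θN - θj‖ ^ 2 := by gcongr
  refine le_of_quadratic_upper_lower_bounds (hsmooth θi θN) (hconv θj θN) hLμ ?_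
  rw [norm_sub_rev θi θN, norm_sub_rev θj θN]
  exact mul_le_of_le_abs_div hdist hδsq hgrad
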